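/- Let A be a quantale and let Q be a projective generator in the category Mod_A(Sl) of right A-modules. Then the quantales A and Hom_A(Q,Q) are Morita equivalent, where Hom_A(Q,Q) is the endomorphism quantale of Q (the sup-lattice of A-module endomorphisms of Q with pointwise suprema, composition as multiplication, and the identity as unit). -/

import Mathlib

open CategoryTheory Set

universe u v w

class UQuantale (A : Type u) extends CompleteLattice A, Monoid A where
  mul_sSup : ∀ (a : A) (s : Set A), a * sSup s = ⨆ b ∈ s, a * b
  sSup_mul : ∀ (s : Set A) (b : A), sSup s * b = ⨆ a ∈ s, a * b

namespace UQuantale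
variable {A : Type u} [UQuantale A]

theorem mul_iSup {ι : Sort w} (a : A) (f : ι → A) : a * (⨆ i, f i) = ⨆ i, a * f i := by
  rw [iSup, mul_sSup]; exact iSup_range

theorem iSup_mul {ι : Sort w} (f : ι → A) (b : A) : (⨆ i, f i) * b = ⨆ i, f i * b := by
  rw [iSup, sSup_mul]; exact iSup_range

theorem mul_bot (a : A) : a * (⊥ : A) = ⊥ := by
  have := mul_sSup a (∅ : Set A); simpa using this

theorem bot_mul (a : A) : (⊥ : A) * a = ⊥ := by
  have := sSup_mul (∅ : Set A) a; simpa using this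

end UQuantale

structure QMod (A : Type u) [UQuantale A] : Type (max u (v + 1)) where
  carrier : Type v
  [latt : CompleteLattice carrier]
  act : carrier → A → carrier
  act_one : ∀ m, act m 1 = m
  act_mul : ∀ m a b, act m (a * b) = act (act m a) b
  sSup_act : ∀ (s : Set carrier) (a : A), act (sSup s) a = ⨆ m ∈ s, act m a
  act_sSup : ∀ (m : carrier) (s : Set A), act m (sSup s) = ⨆ a ∈ s, act m a

attribute [instance] QMod.latt

namespace QMod

variable {A : Type u} [UQuantale A]

def IsHom (M N : QMod.{u, v} A) (f : M.carrier → N.carrier) : Prop :=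
  (∀ s : Set M.carrier, f (sSup s) = ⨆ m ∈ s, f m) ∧
  (∀ m a, f (M.act m a) = N.act (f m) a)

theorem isHom_id (M : QMod.{u, v} A) : IsHom M M id :=
  ⟨fun s => by simp [sSup_eq_iSup], fun _ _ => rfl⟩

theorem isHom_comp {M N P : QMod.{u, v} A} {f : M.carrier → N.carrier}
    {g : N.carrier → P.carrier} (hf : IsHom M N f) (hg : IsHom N P g) :
    IsHom M P (g ∘ f) := by
  constructor
  · intro s
    show g (f (sSup s)) = _
    rw [hf.1 s, ← sSup_image, hg.1, iSup_image]
    rfl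
  · intro m a
    show g (f (M.act m a)) = _
    rw [hf.2, hg.2]
    rfl

instance : Category.{v} (QMod.{u, v} A) where
  Hom M N := { f : M.carrier → N.carrier // IsHom M N f }
  id M := ⟨id, isHom_id M⟩
  comp f g := ⟨g.1 ∘ f.1, isHom_comp f.2 g.2⟩
  id_comp _ := Subtype.ext rfl
  comp_id _ := Subtype.ext rfl
  assoc _ _ _ := Subtype.ext rfl

theorem iSup_act (M : QMod.{u, v} A) {ι : Sort w} (g : ι → M.carrier) (a : A) :
    M.act (⨆ i, g i) a = ⨆ i, M.act (g i) a := by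
  rw [iSup, M.sSup_act]; exact iSup_range

theorem act_iSup (M : QMod.{u, v} A) (m : M.carrier) {ι : Sort w} (g : ι → A) :
    M.act m (⨆ i, g i) = ⨆ i, M.act m (g i) := by
  rw [iSup, M.act_sSup]; exact iSup_range

theorem hom_iSup {M N : QMod.{u, v} A} (f : M ⟶ N) {ι : Sort w} (g : ι → M.carrier) :
    f.1 (⨆ i, g i) = ⨆ i, f.1 (g i) := by
  rw [iSup, f.2.1, iSup_range]

/-- The pointwise supremum of a set of module morphisms is a module morphism. -/
theorem isHom_biSup {M N : QMod.{u, v} A} (s : Set (M ⟶ N)) :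
    IsHom M N (fun m => ⨆ f ∈ s, f.1 m) := by
  constructor
  · intro t
    calc (⨆ f ∈ s, f.1 (sSup t)) = ⨆ f ∈ s, ⨆ m ∈ t, f.1 m :=
          iSup_congr fun f => iSup_congr fun _ => f.2.1 t
      _ = ⨆ m ∈ t, ⨆ f ∈ s, f.1 m := iSup₂_comm _
  · intro m a
    simp only [iSup_act]
    exact iSup_congr fun f => iSup_congr fun _ => f.2.2 m a

instance homSupSet (M N : QMod.{u, v} A) : SupSet (M ⟶ N) :=
  ⟨fun s => ⟨fun m => ⨆ f ∈ s, f.1 m, isHom_biSup s⟩⟩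

instance homPartialOrder (M N : QMod.{u, v} A) : PartialOrder (M ⟶ N) :=
  inferInstanceAs (PartialOrder { f : M.carrier → N.carrier // IsHom M N f })

theorem hom_le_iff {M N : QMod.{u, v} A} {f g : M ⟶ N} : f ≤ g ↔ ∀ m, f.1 m ≤ g.1 m :=
  Iff.rfl

instance homCompleteLattice (M N : QMod.{u, v} A) : CompleteLattice (M ⟶ N) :=
  completeLatticeOfSup _ (fun s => by
    constructor
    · intro f hf
      intro m
      exact le_iSup₂ (f := fun (f : M ⟶ N) (_ : f ∈ s) => f.1 m) f hf
    · intro g hg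
      intro m
      exact iSup₂_le fun f hf => hg hf m)

theorem sSup_hom_apply {M N : QMod.{u, v} A} (s : Set (M ⟶ N)) (m : M.carrier) :
    (sSup s).1 m = ⨆ f ∈ s, f.1 m := rfl

theorem iSup_hom_apply {M N : QMod.{u, v} A} {ι : Sort w} (F : ι → (M ⟶ N)) (m : M.carrier) :
    (⨆ i, F i).1 m = ⨆ i, (F i).1 m := by
  rw [iSup]
  show ⨆ f ∈ range F, f.1 m = _
  exact iSup_range

instance endMonoid (M : QMod.{u, v} A) : Monoid (M ⟶ M) where
  mul f g := g ≫ f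
  one := 𝟙 M
  mul_assoc _ _ _ := Subtype.ext rfl
  one_mul _ := Subtype.ext rfl
  mul_one _ := Subtype.ext rfl

theorem end_mul_apply {M : QMod.{u, v} A} (f g : M ⟶ M) (m : M.carrier) :
    (f * g).1 m = f.1 (g.1 m) := rfl

/-- The endomorphism quantale `Hom_A(M,M)` of a right `A`-module `M`:
multiplication is composition, the unit is the identity, suprema are pointwise. -/
instance endQuantale (M : QMod.{u, v} A) : UQuantale (M ⟶ M) :=
  { homCompleteLattice M M, endMonoid M with
    mul_sSup := fun a s => by
      apply Subtype.ext
      funext m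
      show a.1 ((sSup s).1 m) = (⨆ b ∈ s, a * b).1 m
      rw [sSup_hom_apply]
      simp only [hom_iSup, iSup_hom_apply]
      rfl
    sSup_mul := fun s b => by
      apply Subtype.ext
      funext m
      show (sSup s).1 (b.1 m) = (⨆ a ∈ s, a * b).1 m
      rw [sSup_hom_apply]
      simp only [iSup_hom_apply]
      rfl }

/-- `Q` is a generator of the category of right `A`-modules:
the hom functor out of `Q` is faithful. -/
def IsGenerator {A : Type u} [UQuantale A] (Q : QMod.{u, v} A) : Prop :=
  ∀ {M N : QMod.{u, v} A} (f g : M ⟶ N), (∀ h : Q ⟶ M, h ≫ f = h ≫ g) → f = g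

/-- `Q` is projective: the hom functor out of `Q` sends epimorphisms to surjections. -/
def IsProjective {A : Type u} [UQuantale A] (Q : QMod.{u, v} A) : Prop :=
  ∀ {M N : QMod.{u, v} A} (p : M ⟶ N), Epi p → ∀ h : Q ⟶ N, ∃ k : Q ⟶ M, k ≫ p = h

end QMod

def MoritaEquivalent (A B : Type u) [UQuantale A] [UQuantale B] : Prop :=
  Nonempty (QMod.{u, u} A ≌ QMod.{u, u} B)

def IsQuantaleIso {A : Type u} {B : Type v} [UQuantale A] [UQuantale B] (f : A → B) : Prop :=
  Function.Bijective f ∧ (∀ s : Set A, f (sSup s) = ⨆ a ∈ s, f a) ∧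
    f 1 = 1 ∧ ∀ a a' : A, f (a * a') = f a * f a'

/-!
`Hom_A(Q, −)` is an equivalence from right `A`-modules to right `B`-modules, `B = Hom_A(Q, Q)`.
Faithfulness is the generator property. Testing it against the dual module `A*` (the order dual
of `A`, on which `b` acts by residuation `b ⇨ᵣ −`) shows that `1 = ⨆ᵢ gᵢ(xᵢ)` over the pairs
`gᵢ : Q → A`, `xᵢ ∈ Q` with `gᵢ(xᵢ) ≤ 1`. Hence every `m = ⨆ᵢ (m·gᵢ)(xᵢ)` is a join of values of
maps `Q → M`, and a `B`-linear `φ` is induced by `m ↦ ⨆ᵢ φ(m·gᵢ)(xᵢ)`: fullness.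
Projectivity, applied to the surjection `A^Q → Q`, `e ↦ ⨆ₓ x·e(x)`, yields a dual basis
`q = ⨆ᵢ eᵢ·fᵢ(q)`, with which every `B`-module `N` is isomorphic to
`Hom_A(Q, Hom_B(Hom_A(Q, A), N))`: essential surjectivity.
-/

instance UQuantale.isQuantale (A : Type u) [UQuantale A] : IsQuantale A :=
  ⟨UQuantale.mul_sSup, UQuantale.sSup_mul⟩

namespace QMod

open Quantale

variable {A : Type u} [UQuantale A]

@[ext]
theorem hom_ext {M N : QMod.{u, v} A} {f g : M ⟶ N} (h : ∀ m, f.1 m = g.1 m) : f = g :=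
  Subtype.ext (funext h)

@[simp]
theorem comp_val {M N P : QMod.{u, v} A} (f : M ⟶ N) (g : N ⟶ P) (m : M.carrier) :
    (f ≫ g).1 m = g.1 (f.1 m) :=
  rfl

theorem comp_iSup {M N P : QMod.{u, v} A} {ι : Sort*} (f : M ⟶ N) (g : ι → (N ⟶ P)) :
    f ≫ ⨆ i, g i = ⨆ i, f ≫ g i := by
  ext m
  simp only [comp_val, iSup_hom_apply]

theorem iSup_comp {M N P : QMod.{u, v} A} {ι : Sort*} (f : ι → (M ⟶ N)) (g : N ⟶ P) :
    (⨆ i, f i) ≫ g = ⨆ i, f i ≫ g := by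
  ext m
  simp only [comp_val, iSup_hom_apply, hom_iSup]

def isoOfInverse {M N : QMod.{u, v} A} (f : M ⟶ N) (g : N.carrier → M.carrier)
    (hgf : Function.LeftInverse g f.1) (hfg : Function.RightInverse g f.1) : M ≅ N where
  hom := f
  inv := by
    refine ⟨g, fun s => hgf.injective ?_, fun n a => hgf.injective ?_⟩
    · simp only [sSup_eq_iSup, hom_iSup, hfg _]
    · rw [f.2.2, hfg, hfg]
  hom_inv_id := by ext m; exact hgf m
  inv_hom_id := by ext n; exact hfg n

theorem epi_of_surjective {M N : QMod.{u, v} A} (p : M ⟶ N) (hp : Function.Surjective p.1) :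
    Epi p where
  left_cancellation g h hgh := by
    ext n
    obtain ⟨m, rfl⟩ := hp n
    exact congrArg (fun k => k.1 m) hgh

variable (A) in
abbrev self : QMod.{u, u} A where
  carrier := A
  act := (· * ·)
  act_one := mul_one
  act_mul m a b := (mul_assoc m a b).symm
  sSup_act := UQuantale.sSup_mul
  act_sSup := UQuantale.mul_sSup

variable (A) in
abbrev dual : QMod.{u, u} A where
  carrier := Aᵒᵈ
  act c b := OrderDual.toDual (b ⇨ᵣ OrderDual.ofDual c)
  act_one c := by
    refine OrderDual.ofDual.injective (eq_of_forall_le_iff fun x => ?_)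
    simp [rightMulResiduation_le_iff_mul_le]
  act_mul c a b := by
    refine OrderDual.ofDual.injective (eq_of_forall_le_iff fun x => ?_)
    simp [rightMulResiduation_le_iff_mul_le, mul_assoc]
  sSup_act s a := by
    refine OrderDual.ofDual.injective (eq_of_forall_le_iff fun x => ?_)
    simp [rightMulResiduation_le_iff_mul_le]
  act_sSup c s := by
    refine OrderDual.ofDual.injective (eq_of_forall_le_iff fun x => ?_)
    simp [rightMulResiduation_le_iff_mul_le, sSup_mul_distrib]

def orbitHom {M : QMod.{u, u} A} (m : M.carrier) : self A ⟶ M :=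
  ⟨fun a => M.act m a, M.act_sSup m, M.act_mul m⟩

@[simp]
theorem orbitHom_apply {M : QMod.{u, u} A} (m : M.carrier) (a : A) :
    (orbitHom m).1 a = M.act m a :=
  rfl

theorem orbitHom_comp {M N : QMod.{u, u} A} (m : M.carrier) (h : M ⟶ N) :
    orbitHom m ≫ h = orbitHom (h.1 m) := by
  ext a
  exact h.2.2 m a

theorem orbitHom_sSup {M : QMod.{u, u} A} (s : Set M.carrier) :
    orbitHom (sSup s) = ⨆ m ∈ s, orbitHom m := by
  ext a
  simp only [orbitHom_apply, iSup_hom_apply, M.sSup_act]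

theorem orbitHom_one : orbitHom (M := self A) (1 : A) = 𝟙 (self A) := by
  ext a
  exact one_mul a

theorem orbitHom_mul (a b : A) : orbitHom (M := self A) (a * b) = orbitHom b ≫ orbitHom a := by
  ext c
  exact mul_assoc a b c

theorem IsGenerator.eq_of_forall_act_apply_eq {Q M : QMod.{u, u} A} (hgen : IsGenerator Q)
    {m m' : M.carrier}
    (h : ∀ (g : Q ⟶ self A) (x : Q.carrier), M.act m (g.1 x) = M.act m' (g.1 x)) : m = m' := by
  have := hgen (orbitHom m) (orbitHom m') fun g => by ext x; exact h g x
  simpa only [orbitHom_apply, M.act_one] using congrArg (fun k => k.1 1) this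

theorem IsGenerator.exists_iSup_apply_eq_one {Q : QMod.{u, u} A} (hgen : IsGenerator Q) :
    ∃ (ι : Type u) (g : ι → (Q ⟶ self A)) (x : ι → Q.carrier),
      ⨆ i, (g i).1 (x i) = 1 := by
  let ι := {p : (Q ⟶ self A) × Q.carrier // p.1.1 p.2 ≤ 1}
  refine ⟨ι, fun i => i.1.1, fun i => i.1.2, ?_⟩
  set c := ⨆ i : ι, i.1.1.1 i.1.2
  have hc : c ≤ 1 := iSup_le fun i => i.2
  have hres : ∀ (g : Q ⟶ self A) (x : Q.carrier), g.1 x ⇨ᵣ c = g.1 x ⇨ᵣ (1 : A) := by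
    refine fun g x => eq_of_forall_le_iff fun y => ?_
    rw [rightMulResiduation_le_iff_mul_le, rightMulResiduation_le_iff_mul_le]
    have hlin : g.1 (Q.act x y) = g.1 x * y := g.2.2 x y
    rw [← hlin]
    exact ⟨fun h => h.trans hc,
      fun h => le_iSup (fun i : ι => i.1.1.1 i.1.2) ⟨(g, Q.act x y), h⟩⟩
  exact OrderDual.toDual.injective <| hgen.eq_of_forall_act_apply_eq (M := dual A)
    fun g x => congrArg OrderDual.toDual (hres g x)

variable (A) in
abbrev free (X : Type u) : QMod.{u, u} A where
  carrier := X → A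
  act e a x := e x * a
  act_one e := funext fun x => mul_one (e x)
  act_mul e a b := funext fun x => (mul_assoc (e x) a b).symm
  sSup_act s a := funext fun x => by simp [iSup_mul_distrib, iSup_subtype']
  act_sSup e s := funext fun x => by simp [mul_sSup_distrib]

def evalHom {X : Type u} (x : X) : free A X ⟶ self A :=
  ⟨fun e => e x, fun s => by simp [iSup_subtype'], fun _ _ => rfl⟩

def sumHom (Q : QMod.{u, u} A) : free A Q.carrier ⟶ Q := by
  refine ⟨fun e => ⨆ x, Q.act x (e x), fun s => ?_, fun e a => ?_⟩
  · simp only [sSup_apply, Q.act_iSup, iSup_subtype']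
    exact iSup_comm
  · simp only [Q.iSup_act, Q.act_mul]

theorem sumHom_surjective (Q : QMod.{u, u} A) : Function.Surjective (sumHom Q).1 := by
  intro q
  refine ⟨fun x => ⨆ _ : x = q, 1, ?_⟩
  change ⨆ x, Q.act x (⨆ _ : x = q, 1) = q
  simp only [Q.act_iSup, iSup_iSup_eq_left, Q.act_one]

theorem IsProjective.exists_dualBasis {Q : QMod.{u, u} A} (hproj : IsProjective Q) :
    ∃ (ι : Type u) (e : ι → Q.carrier) (f : ι → (Q ⟶ self A)),
      ∀ q, ⨆ i, Q.act (e i) ((f i).1 q) = q := by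
  obtain ⟨k, hk⟩ := hproj (sumHom Q) (epi_of_surjective _ (sumHom_surjective Q)) (𝟙 Q)
  exact ⟨Q.carrier, id, fun x => k ≫ evalHom x, fun q => congrArg (fun h => h.1 q) hk⟩

abbrev homMod (Q M : QMod.{u, v} A) : QMod.{v, v} (Q ⟶ Q) where
  carrier := Q ⟶ M
  act h b := b ≫ h
  act_one _ := rfl
  act_mul _ _ _ := rfl
  sSup_act s b := by simp only [sSup_eq_iSup, comp_iSup]
  act_sSup h s := by simp only [sSup_eq_iSup, iSup_comp]

def postcompHom (Q : QMod.{u, v} A) {M N : QMod.{u, v} A} (f : M ⟶ N) :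
    homMod Q M ⟶ homMod Q N :=
  ⟨fun h => h ≫ f, fun s => by simp only [sSup_eq_iSup, iSup_comp], fun _ _ => rfl⟩

theorem postcompHom_iSup (Q : QMod.{u, v} A) {M N : QMod.{u, v} A} {ι : Sort*}
    (f : ι → (M ⟶ N)) : postcompHom Q (⨆ i, f i) = ⨆ i, postcompHom Q (f i) := by
  refine hom_ext fun h => ?_
  exact (comp_iSup h f).trans (iSup_hom_apply (fun i => postcompHom Q (f i)) h).symm

def homFunctor (Q : QMod.{u, v} A) : QMod.{u, v} A ⥤ QMod.{v, v} (Q ⟶ Q) where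
  obj := homMod Q
  map := postcompHom Q
  map_id _ := rfl
  map_comp _ _ := rfl

theorem homFunctor_faithful {Q : QMod.{u, v} A} (hgen : IsGenerator Q) :
    (homFunctor Q).Faithful where
  map_injective {_ _} f f' hff' := hgen f f' fun h => congrArg (fun k => k.1 h) hff'

section Full

variable {Q : QMod.{u, u} A} {ι : Type w} (g : ι → (Q ⟶ self A)) (x : ι → Q.carrier)

theorem iSup_orbitHom_apply_eq (hgx : ⨆ i, (g i).1 (x i) = 1) {M : QMod.{u, u} A}
    (m : M.carrier) : ⨆ i, (g i ≫ orbitHom m).1 (x i) = m := by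
  simp only [comp_val, orbitHom_apply, ← M.act_iSup, hgx, M.act_one]

variable {M N : QMod.{u, u} A} (φ : homMod Q M ⟶ homMod Q N)

def preimageFun (m : M.carrier) : N.carrier :=
  ⨆ i, (φ.1 (g i ≫ orbitHom m)).1 (x i)

theorem preimageFun_sSup (s : Set M.carrier) :
    preimageFun g x φ (sSup s) = ⨆ m ∈ s, preimageFun g x φ m := by
  simp only [preimageFun, orbitHom_sSup, comp_iSup, hom_iSup φ, iSup_hom_apply]
  rw [iSup_comm]
  exact iSup_congr fun _ => iSup_comm

theorem preimageFun_iSup {κ : Sort*} (m : κ → M.carrier) :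
    preimageFun g x φ (⨆ k, m k) = ⨆ k, preimageFun g x φ (m k) := by
  rw [iSup, preimageFun_sSup, iSup_range]

theorem preimageFun_hom_apply (hgx : ⨆ i, (g i).1 (x i) = 1) (h : Q ⟶ M) (q : Q.carrier) :
    preimageFun g x φ (h.1 q) = (φ.1 h).1 q := by
  have hφ : ∀ i, φ.1 (g i ≫ orbitHom (h.1 q)) = (g i ≫ orbitHom q) ≫ φ.1 h := fun i => by
    rw [← orbitHom_comp, ← Category.assoc]
    exact φ.2.2 h (g i ≫ orbitHom q)
  calc preimageFun g x φ (h.1 q) = ⨆ i, (φ.1 h).1 ((g i ≫ orbitHom q).1 (x i)) :=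
        iSup_congr fun i => by rw [hφ]; rfl
    _ = (φ.1 h).1 q := by rw [← hom_iSup, iSup_orbitHom_apply_eq g x hgx]

theorem preimageFun_act (hgx : ⨆ i, (g i).1 (x i) = 1) (m : M.carrier) (a : A) :
    preimageFun g x φ (M.act m a) = N.act (preimageFun g x φ m) a := by
  have hm : M.act m a = ⨆ i, (g i ≫ orbitHom m).1 (Q.act (x i) a) := by
    conv_lhs => rw [← iSup_orbitHom_apply_eq g x hgx m]
    rw [M.iSup_act]
    exact iSup_congr fun i => ((g i ≫ orbitHom m).2.2 (x i) a).symm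
  rw [hm, preimageFun_iSup, preimageFun, N.iSup_act]
  simp only [preimageFun_hom_apply g x φ hgx]
  exact iSup_congr fun i => (φ.1 (g i ≫ orbitHom m)).2.2 (x i) a

theorem homFunctor_full (hgx : ⨆ i, (g i).1 (x i) = 1) : (homFunctor Q).Full where
  map_surjective {_ _} φ :=
    ⟨⟨preimageFun g x φ, preimageFun_sSup g x φ, preimageFun_act g x φ hgx⟩, by
      refine hom_ext fun h => hom_ext fun q => ?_
      exact preimageFun_hom_apply g x φ hgx h q⟩

end Full

section EssSurj

variable {Q : QMod.{u, u} A} {N : QMod.{u, u} (Q ⟶ Q)}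

/-- `Hom_B(Q*, N)` with `Q* = Hom_A(Q, A)` and `B = Hom_A(Q, Q)`: a model of `N ⊗_B Q`. -/
abbrev homFromDual (Q : QMod.{u, u} A) (N : QMod.{u, u} (Q ⟶ Q)) : QMod.{u, u} A where
  carrier := homMod Q (self A) ⟶ N
  act Φ a := postcompHom Q (orbitHom (M := self A) a) ≫ Φ
  act_one Φ := by rw [orbitHom_one]; rfl
  act_mul Φ a b := by rw [orbitHom_mul]; rfl
  sSup_act s a := by simp only [sSup_eq_iSup, comp_iSup]
  act_sSup Φ s := by
    change postcompHom Q (orbitHom (M := self A) (sSup s)) ≫ Φ = _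
    rw [orbitHom_sSup]
    simp only [postcompHom_iSup, iSup_comp]

variable (N) in
def unitAt (n : N.carrier) (q : Q.carrier) : homMod Q (self A) ⟶ N :=
  ⟨fun g => N.act n (g ≫ orbitHom q),
    fun S => by simp only [sSup_eq_iSup, iSup_comp, N.act_iSup],
    fun g b => N.act_mul n (g ≫ orbitHom q) b⟩

@[simp]
theorem unitAt_apply (n : N.carrier) (q : Q.carrier) (g : Q ⟶ self A) :
    (unitAt N n q).1 g = N.act n (g ≫ orbitHom q) :=
  rfl

variable (N) in
def unitOf (n : N.carrier) : Q ⟶ homFromDual Q N := by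
  refine ⟨unitAt N n, fun s => ?_, fun q a => ?_⟩
  · ext g
    simp only [unitAt_apply, orbitHom_sSup, comp_iSup, N.act_iSup, iSup_hom_apply]
  · ext g
    change N.act n (g ≫ orbitHom (Q.act q a)) = N.act n ((g ≫ orbitHom a) ≫ orbitHom q)
    rw [Category.assoc, orbitHom_comp, orbitHom_apply]

@[simp]
theorem unitOf_apply (n : N.carrier) (q : Q.carrier) : (unitOf N n).1 q = unitAt N n q :=
  rfl

variable (N) in
def unitHom : N ⟶ homMod Q (homFromDual Q N) := by
  refine ⟨unitOf N, fun T => ?_, fun n b => ?_⟩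
  · ext q g
    simp only [unitOf_apply, unitAt_apply, N.sSup_act, iSup_hom_apply]
  · ext q g
    change N.act (N.act n b) (g ≫ orbitHom q) = N.act n (g ≫ orbitHom (b.1 q))
    rw [← N.act_mul, ← orbitHom_comp]
    rfl

variable {κ : Type w} (e : κ → Q.carrier) (f : κ → (Q ⟶ self A))

def counitFun (H : Q ⟶ homFromDual Q N) : N.carrier :=
  ⨆ i, (H.1 (e i)).1 (f i)

theorem iSup_comp_orbitHom_eq_id (hef : ∀ q, ⨆ i, Q.act (e i) ((f i).1 q) = q) :
    ⨆ i, f i ≫ orbitHom (e i) = 𝟙 Q := by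
  ext q
  simp only [iSup_hom_apply, comp_val, orbitHom_apply, hef]
  rfl

theorem counitFun_unitHom (hef : ∀ q, ⨆ i, Q.act (e i) ((f i).1 q) = q) (n : N.carrier) :
    counitFun e f ((unitHom N).1 n) = n := by
  change ⨆ i, N.act n (f i ≫ orbitHom (e i)) = n
  rw [← N.act_iSup, iSup_comp_orbitHom_eq_id e f hef]
  exact N.act_one n

theorem unitHom_counitFun (hef : ∀ q, ⨆ i, Q.act (e i) ((f i).1 q) = q)
    (H : Q ⟶ homFromDual Q N) : (unitHom N).1 (counitFun e f H) = H := by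
  ext q g
  calc N.act (⨆ i, (H.1 (e i)).1 (f i)) (g ≫ orbitHom q)
      = ⨆ i, (H.1 (e i)).1 (g ≫ orbitHom q ≫ f i) := by
        rw [N.iSup_act]
        exact iSup_congr fun i => ((H.1 (e i)).2.2 (f i) (g ≫ orbitHom q)).symm
    _ = ⨆ i, (H.1 (Q.act (e i) ((f i).1 q))).1 g := by
        refine iSup_congr fun i => ?_
        rw [orbitHom_comp, H.2.2]
        rfl
    _ = (H.1 q).1 g := by
        rw [← iSup_hom_apply, ← hom_iSup, hef]

theorem homFunctor_essSurj (hef : ∀ q, ⨆ i, Q.act (e i) ((f i).1 q) = q) :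
    (homFunctor Q).EssSurj where
  mem_essImage N := ⟨homFromDual Q N,
    ⟨(isoOfInverse (unitHom N) (counitFun e f) (counitFun_unitHom e f hef)
      (unitHom_counitFun e f hef)).symm⟩⟩

end EssSurj

end QMod

theorem morita_of_projective_generator (A : Type u) [UQuantale A] (Q : QMod.{u, u} A)
    (hgen : QMod.IsGenerator Q) (hproj : QMod.IsProjective Q) :
    MoritaEquivalent A (Q ⟶ Q) := by
  obtain ⟨ι, g, x, hgx⟩ := hgen.exists_iSup_apply_eq_one
  obtain ⟨κ, e, f, hef⟩ := hproj.exists_dualBasis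
  have := QMod.homFunctor_faithful hgen
  have := QMod.homFunctor_full g x hgx
  have := QMod.homFunctor_essSurj e f hef
  have : (QMod.homFunctor Q).IsEquivalence := {}
  exact ⟨(QMod.homFunctor Q).asEquivalence⟩
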